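/- Suppose L : ℝ^d → ℝ is μ-strongly convex and L-smooth, η ∈ (0, 1/L], and ĝ^t satisfies ‖ĝ^t - ∇L(w^t)‖ ≤ M for all t. Define w^{t+1} = w^t - ηĝ^t and let w* be the unique minimizer of L. Then ‖w^t - w*‖ ≤ (√(1-ημ))^t ‖w^0 - w*‖ + ηM(1-(√(1-ημ))^t)/(1-√(1-ημ)) for all t. -/

import Mathlib

/-!
One exact gradient step contracts the distance to the minimizer by the factor `√(1 - ημ)`:
expanding the square, strong convexity at the minimizer controls the inner product term, and
the gradient norm is controlled by the suboptimality gap via the descent lemma (this is where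
`η ≤ 1 / L` enters). The gradient error then adds at most `ηM` per step, and unrolling the
recursion `a (t + 1) ≤ r a t + ηM` gives the geometric bound.
-/

open scoped RealInnerProductSpace

theorem le_pow_mul_add_geom_of_le_mul_add {a : ℕ → ℝ} {r b : ℝ} (hr : 0 ≤ r) (hr1 : r ≠ 1)
    (h : ∀ t, a (t + 1) ≤ r * a t + b) (t : ℕ) :
    a t ≤ r ^ t * a 0 + b * (1 - r ^ t) / (1 - r) := by
  induction t with
  | zero => simp
  | succ t ih =>
    have h1r : 1 - r ≠ 0 := sub_ne_zero.mpr hr1.symm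
    calc a (t + 1) ≤ r * (r ^ t * a 0 + b * (1 - r ^ t) / (1 - r)) + b :=
          (h t).trans (by gcongr)
      _ = r ^ (t + 1) * a 0 + b * (1 - r ^ (t + 1)) / (1 - r) := by
          field_simp
          ring

section GradientStep

variable {E : Type*} [NormedAddCommGroup E] [InnerProductSpace ℝ E]
  {f : E → ℝ} {g : E → E} {μ Lc η : ℝ} {xstar : E}

theorem apply_sub_inv_smul_le_of_smooth (hLc : 0 < Lc)
    (hsm : ∀ w1 w2, f w1 ≤ f w2 + ⟪g w2, w1 - w2⟫ + (Lc / 2) * ‖w1 - w2‖ ^ 2) (x : E) :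
    f (x - Lc⁻¹ • g x) ≤ f x - ‖g x‖ ^ 2 / (2 * Lc) := by
  have hstep : x - Lc⁻¹ • g x - x = -(Lc⁻¹ • g x) := by abel
  have h := hsm (x - Lc⁻¹ • g x) x
  rw [hstep, inner_neg_right, real_inner_smul_right, real_inner_self_eq_norm_sq, norm_neg,
    norm_smul, Real.norm_of_nonneg (inv_nonneg.mpr hLc.le)] at h
  convert h using 1
  field_simp
  ring

theorem sq_norm_grad_le_of_smooth (hLc : 0 < Lc)
    (hsm : ∀ w1 w2, f w1 ≤ f w2 + ⟪g w2, w1 - w2⟫ + (Lc / 2) * ‖w1 - w2‖ ^ 2)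
    (hmin : ∀ w, f xstar ≤ f w) (x : E) :
    ‖g x‖ ^ 2 ≤ 2 * Lc * (f x - f xstar) := by
  have h := (hmin _).trans (apply_sub_inv_smul_le_of_smooth hLc hsm x)
  rw [le_sub_comm, div_le_iff₀ (by positivity)] at h
  linarith

theorem sq_norm_gradStep_sub_le (hLc : 0 < Lc) (hη : 0 ≤ η) (hηLc : η * Lc ≤ 1)
    (hsc : ∀ w1 w2, f w1 ≥ f w2 + ⟪g w2, w1 - w2⟫ + (μ / 2) * ‖w1 - w2‖ ^ 2)
    (hsm : ∀ w1 w2, f w1 ≤ f w2 + ⟪g w2, w1 - w2⟫ + (Lc / 2) * ‖w1 - w2‖ ^ 2)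
    (hmin : ∀ w, f xstar ≤ f w) (x : E) :
    ‖x - η • g x - xstar‖ ^ 2 ≤ (1 - η * μ) * ‖x - xstar‖ ^ 2 := by
  have hexpand : ‖x - η • g x - xstar‖ ^ 2 =
      ‖x - xstar‖ ^ 2 - 2 * η * ⟪g x, x - xstar⟫ + η ^ 2 * ‖g x‖ ^ 2 := by
    rw [sub_right_comm, norm_sub_sq_real, real_inner_smul_right, norm_smul,
      Real.norm_of_nonneg hη, real_inner_comm]
    ring
  have hinner : f x - f xstar + μ / 2 * ‖x - xstar‖ ^ 2 ≤ ⟪g x, x - xstar⟫ := by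
    have h := hsc xstar x
    rw [← neg_sub x xstar, inner_neg_right, norm_neg] at h
    linarith
  have hgrad : η ^ 2 * ‖g x‖ ^ 2 ≤ 2 * η * (f x - f xstar) := by
    have hgap : 0 ≤ f x - f xstar := sub_nonneg.mpr (hmin x)
    calc η ^ 2 * ‖g x‖ ^ 2 ≤ η ^ 2 * (2 * Lc * (f x - f xstar)) := by
          gcongr; exact sq_norm_grad_le_of_smooth hLc hsm hmin x
      _ = 2 * η * (η * Lc) * (f x - f xstar) := by ring
      _ ≤ 2 * η * 1 * (f x - f xstar) := by gcongr
      _ = 2 * η * (f x - f xstar) := by ring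
  rw [hexpand]
  nlinarith [mul_le_mul_of_nonneg_left hinner hη]

theorem norm_gradStep_sub_le (hLc : 0 < Lc) (hη : 0 ≤ η) (hηLc : η * Lc ≤ 1)
    (hsc : ∀ w1 w2, f w1 ≥ f w2 + ⟪g w2, w1 - w2⟫ + (μ / 2) * ‖w1 - w2‖ ^ 2)
    (hsm : ∀ w1 w2, f w1 ≤ f w2 + ⟪g w2, w1 - w2⟫ + (Lc / 2) * ‖w1 - w2‖ ^ 2)
    (hmin : ∀ w, f xstar ≤ f w) (x : E) :
    ‖x - η • g x - xstar‖ ≤ √(1 - η * μ) * ‖x - xstar‖ := by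
  calc ‖x - η • g x - xstar‖ = √(‖x - η • g x - xstar‖ ^ 2) := (Real.sqrt_sq (norm_nonneg _)).symm
    _ ≤ √((1 - η * μ) * ‖x - xstar‖ ^ 2) :=
        Real.sqrt_le_sqrt (sq_norm_gradStep_sub_le hLc hη hηLc hsc hsm hmin x)
    _ = √(1 - η * μ) * ‖x - xstar‖ := by
        rw [Real.sqrt_mul' _ (sq_nonneg _), Real.sqrt_sq (norm_nonneg _)]

end GradientStep

theorem inexact_gd_to_minimizer_general
    {d : ℕ} (L : EuclideanSpace ℝ (Fin d) → ℝ)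
    (g : EuclideanSpace ℝ (Fin d) → EuclideanSpace ℝ (Fin d))
    (μ Lc η M : ℝ) (hμ : 0 < μ) (hLc : 0 < Lc)
    (hsc : ∀ w1 w2, L w1 ≥ L w2 + ⟪g w2, w1 - w2⟫ + (μ / 2) * ‖w1 - w2‖ ^ 2)
    (hsm : ∀ w1 w2, L w1 ≤ L w2 + ⟪g w2, w1 - w2⟫ + (Lc / 2) * ‖w1 - w2‖ ^ 2)
    (hη : 0 < η) (hηL : η ≤ 1 / Lc)
    (wstar : EuclideanSpace ℝ (Fin d)) (hmin : ∀ w, L wstar ≤ L w)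
    (w : ℕ → EuclideanSpace ℝ (Fin d)) (ghat : ℕ → EuclideanSpace ℝ (Fin d))
    (hupd : ∀ t, w (t + 1) = w t - η • ghat t)
    (herr : ∀ t, ‖ghat t - g (w t)‖ ≤ M) :
    ∀ t, ‖w t - wstar‖ ≤ (Real.sqrt (1 - η * μ)) ^ t * ‖w 0 - wstar‖ +
      η * M * (1 - (Real.sqrt (1 - η * μ)) ^ t) / (1 - Real.sqrt (1 - η * μ)) := by
  have hηLc : η * Lc ≤ 1 := (le_div_iff₀ hLc).mp hηL
  have hr1 : √(1 - η * μ) ≠ 1 := by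
    rw [Ne, Real.sqrt_eq_one]
    nlinarith [mul_pos hη hμ]
  refine le_pow_mul_add_geom_of_le_mul_add (Real.sqrt_nonneg _) hr1 fun t => ?_
  have hsplit : w (t + 1) - wstar = (w t - η • g (w t) - wstar) - η • (ghat t - g (w t)) := by
    rw [hupd t, smul_sub]
    abel
  calc ‖w (t + 1) - wstar‖
      ≤ ‖w t - η • g (w t) - wstar‖ + ‖η • (ghat t - g (w t))‖ := hsplit ▸ norm_sub_le _ _
    _ ≤ √(1 - η * μ) * ‖w t - wstar‖ + η * M := by
        rw [norm_smul, Real.norm_of_nonneg hη.le]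
        gcongr
        · exact norm_gradStep_sub_le hLc hη.le hηLc hsc hsm hmin (w t)
        · exact herr t

/-- Inexact gradient descent on a μ-strongly convex, L-smooth function converges
geometrically to a neighborhood of the unique minimizer. -/
theorem inexact_gd_to_minimizer
    {d : ℕ} (L : EuclideanSpace ℝ (Fin d) → ℝ)
    (g : EuclideanSpace ℝ (Fin d) → EuclideanSpace ℝ (Fin d))
    (μ Lc η M : ℝ) (hμ : 0 < μ) (hLc : 0 < Lc) (hμL : μ ≤ Lc) (hM : 0 ≤ M)
    (hdiff : ∀ w, HasGradientAt L (g w) w)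
    (hsc : ∀ w1 w2, L w1 ≥ L w2 + ⟪g w2, w1 - w2⟫ + (μ / 2) * ‖w1 - w2‖ ^ 2)
    (hsm : ∀ w1 w2, L w1 ≤ L w2 + ⟪g w2, w1 - w2⟫ + (Lc / 2) * ‖w1 - w2‖ ^ 2)
    (hη : 0 < η) (hηL : η ≤ 1 / Lc)
    (wstar : EuclideanSpace ℝ (Fin d)) (hmin : ∀ w, L wstar ≤ L w) (hgrad0 : g wstar = 0)
    (w : ℕ → EuclideanSpace ℝ (Fin d)) (ghat : ℕ → EuclideanSpace ℝ (Fin d))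
    (hupd : ∀ t, w (t + 1) = w t - η • ghat t)
    (herr : ∀ t, ‖ghat t - g (w t)‖ ≤ M) :
    ∀ t, ‖w t - wstar‖ ≤ (Real.sqrt (1 - η * μ)) ^ t * ‖w 0 - wstar‖ +
      η * M * (1 - (Real.sqrt (1 - η * μ)) ^ t) / (1 - Real.sqrt (1 - η * μ)) :=
  inexact_gd_to_minimizer_general L g μ Lc η M hμ hLc hsc hsm hη hηL wstar hmin w ghat hupd herr
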